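/- Let N ≥ 2, V = ℂ^N, let P be a one-dimensional ℂ-vector space, α : P → V an injective linear map, and β : P^∨ → V* a linear map with α^∨ ∘ β = 0, and let W_{αβ} be the associated representation of the double Beilinson quiver with relations over ℂ, with (W_{αβ})_k = Sym^k P^∨. Then W_{αβ} is simple (i.e., its only subrepresentations are 0 and W_{αβ}) if and only if β is injective (equivalently, since P^∨ is one-dimensional, if and only if β ≠ 0). -/

import Mathlib

/-!
Since `P` is a line, so is every `Sym^k P^∨`, and a subrepresentation is the choice of `0` or
everything in each degree. Raising by a suitable `f` is nonzero because `α ≠ 0`, so it carries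
"everything" from degree `k` to degree `k + 1`; when `β ≠ 0` a suitable lowering map is nonzero
and carries it back down, so the choice is the same in all degrees. When `β = 0` all lowering maps
vanish and `0 ⊕ Sym^{≥1} P^∨` is a proper nonzero subrepresentation.
-/

open PiTensorProduct

/-- Permutation relations submodule of the `k`-th tensor power. -/
def symRel (A : Type*) [CommRing A] (P : Type*) [AddCommGroup P] [Module A P] (k : ℕ) :
    Submodule A (PiTensorProduct A (fun _ : Fin k => P)) :=
  Submodule.span A
    {x | ∃ (m : Fin k → P) (σ : Equiv.Perm (Fin k)), x = tprod A m - tprod A (m ∘ σ)}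

/-- The `k`-th symmetric power `Sym^k_A P`. -/
abbrev SymPow (A : Type*) [CommRing A] (P : Type*) [AddCommGroup P] [Module A P] (k : ℕ) :=
  PiTensorProduct A (fun _ : Fin k => P) ⧸ symRel A P k

/-- The image `u¹ ⋯ u^k` of `u¹ ⊗ ⋯ ⊗ u^k` in `Sym^k_A P`. -/
noncomputable def mkSym (A : Type*) [CommRing A] {P : Type*} [AddCommGroup P] [Module A P]
    {k : ℕ} (m : Fin k → P) : SymPow A P k :=
  (symRel A P k).mkQ (tprod A m)

open Module

namespace SymPow

section CommRing

variable {A : Type*} [CommRing A] {P : Type*} [AddCommGroup P] [Module A P] {k : ℕ}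

theorem hom_ext {M : Type*} [AddCommGroup M] [Module A M] {f g : SymPow A P k →ₗ[A] M}
    (h : ∀ m, f (mkSym A m) = g (mkSym A m)) : f = g :=
  Submodule.linearMap_qext _ (PiTensorProduct.ext (MultilinearMap.ext h))

theorem span_range_mkSym :
    Submodule.span A (Set.range (mkSym A : (Fin k → P) → SymPow A P k)) = ⊤ := by
  rw [← Submodule.range_mkQ, LinearMap.range_eq_map, ← span_tprod_eq_top, Submodule.map_span,
    ← Set.range_comp]
  rfl

theorem mkSym_smul_univ (c : Fin k → A) (m : Fin k → P) :
    mkSym A (fun i => c i • m i) = (∏ i, c i) • mkSym A m := by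
  simp only [mkSym, MultilinearMap.map_smul_univ, map_smul]

noncomputable def prodDual (φ : Dual A P) : Dual A (SymPow A P k) :=
  (symRel A P k).liftQ
    (lift ((MultilinearMap.mkPiAlgebra A (Fin k) A).compLinearMap fun _ => φ)) <| by
    rw [symRel, Submodule.span_le]
    rintro _ ⟨m, σ, rfl⟩
    simp [Equiv.prod_comp σ (fun i => φ (m i))]

theorem prodDual_mkSym (φ : Dual A P) (m : Fin k → P) :
    prodDual φ (mkSym A m) = ∏ i, φ (m i) := by
  simp [prodDual, mkSym]

end CommRing

variable {K : Type*} [Field K] {Q : Type*} [AddCommGroup Q] [Module K Q] {k : ℕ}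

theorem mkSym_const_ne_zero {e : Q} (he : e ≠ 0) : mkSym K (fun _ : Fin k => e) ≠ 0 := by
  obtain ⟨φ, hφ⟩ := Module.Projective.exists_dual_eq_one K he
  intro h
  simpa [prodDual_mkSym, hφ] using congr_arg (prodDual φ) h

theorem finrank_eq_one (hQ : finrank K Q = 1) : finrank K (SymPow K Q k) = 1 := by
  obtain ⟨e, he, hspan⟩ := finrank_eq_one_iff'.mp hQ
  have hE : K ∙ mkSym K (fun _ : Fin k => e) = ⊤ := by
    rw [eq_top_iff, ← span_range_mkSym, Submodule.span_le]
    rintro _ ⟨m, rfl⟩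
    choose c hc using fun i => hspan (m i)
    rw [← funext hc, mkSym_smul_univ]
    exact Submodule.smul_mem _ _ (Submodule.mem_span_singleton_self _)
  rw [← finrank_top, ← hE, finrank_span_singleton (mkSym_const_ne_zero he)]

end SymPow

section Representation

variable {R : Type*} [Ring R] {M : ℕ → Type*} [∀ k, AddCommGroup (M k)] [∀ k, Module R (M k)]
  {ι : Type*} {m : ℕ} (up : ι → ∀ k : Fin m, M k.val →ₗ[R] M (k.val + 1))
  (down : ι → ∀ k : Fin m, M (k.val + 1) →ₗ[R] M k.val)

def IsSubrep (W : ∀ k : Fin (m + 1), Submodule R (M k.val)) : Prop :=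
  ∀ (c : ι) (k : Fin m),
    (W k.castSucc).map (up c k) ≤ W k.succ ∧ (W k.succ).map (down c k) ≤ W k.castSucc

def IsSimpleRep : Prop :=
  ∀ W, IsSubrep up down W → (∀ k, W k = ⊥) ∨ (∀ k, W k = ⊤)

theorem Submodule.eq_top_of_map_top_le {M₁ M₂ : Type*} [AddCommGroup M₁] [Module R M₁]
    [AddCommGroup M₂] [Module R M₂] [IsSimpleModule R M₂] {f : M₁ →ₗ[R] M₂} (hf : f ≠ 0)
    {W : Submodule R M₂} (h : (⊤ : Submodule R M₁).map f ≤ W) : W = ⊤ := by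
  refine (eq_bot_or_eq_top W).resolve_left fun hW => hf ?_
  rwa [hW, Submodule.map_top, le_bot_iff, LinearMap.range_eq_bot] at h

theorem isSimpleRep_of_ne_zero [∀ k, IsSimpleModule R (M k)] {c d : ι}
    (hup : ∀ k, up c k ≠ 0) (hdown : ∀ k, down d k ≠ 0) : IsSimpleRep up down := by
  intro W hW
  have step (k : Fin m) : W k.castSucc = ⊤ ↔ W k.succ = ⊤ :=
    ⟨fun h => Submodule.eq_top_of_map_top_le (hup k) (by rw [← h]; exact (hW c k).1),
      fun h => Submodule.eq_top_of_map_top_le (hdown k) (by rw [← h]; exact (hW d k).2)⟩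
  have hconst (k : Fin (m + 1)) : W k = ⊤ ↔ W 0 = ⊤ := by
    induction k using Fin.induction with
    | zero => rfl
    | succ k ih => exact (step k).symm.trans ih
  by_cases h0 : W 0 = ⊤
  · exact Or.inr fun k => (hconst k).2 h0
  · exact Or.inl fun k => (eq_bot_or_eq_top (W k)).resolve_right fun hk => h0 ((hconst k).1 hk)

theorem not_isSimpleRep_of_down_eq_zero [∀ k, Nontrivial (M k)] (hm : m ≠ 0)
    (hdown : ∀ c k, down c k = 0) : ¬ IsSimpleRep up down := by
  intro hS
  let W : ∀ k : Fin (m + 1), Submodule R (M k.val) := fun k => if k = 0 then ⊥ else ⊤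
  have hW : IsSubrep up down W := fun c k => by simp [W, hdown, Fin.succ_ne_zero]
  rcases hS W hW with h | h
  · exact hm (by simpa [W] using (h (Fin.last m)).symm)
  · have h0 := h 0
    simp only [W, ↓reduceIte] at h0
    exact bot_ne_top h0

end Representation

section Beilinson

variable {K : Type*} [Field K] {ι : Type*} [Fintype ι] {P : Type*} [AddCommGroup P] [Module K P]

theorem exists_forall_raise_ne_zero {α : P →ₗ[K] (ι → K)} (hα : α ≠ 0) {n : ℕ}
    {raise : (ι → K) → ∀ k : Fin n,
      SymPow K (Dual K P) k.val →ₗ[K] SymPow K (Dual K P) (k.val + 1)}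
    (hraise : ∀ c k (u : Fin k.val → Dual K P),
      raise c k (mkSym K u) = mkSym K (Fin.cons (∑ i, c i • (LinearMap.proj i).comp α) u)) :
    ∃ c, ∀ k, raise c k ≠ 0 := by
  classical
  obtain ⟨p, hp⟩ := DFunLike.ne_iff.mp hα
  obtain ⟨i, hi⟩ := Function.ne_iff.mp hp
  set f : Dual K P := (LinearMap.proj i).comp α
  have hf : ∑ i', (Pi.single i 1 : ι → K) i' • (LinearMap.proj i').comp α = f := by
    simp [Pi.single_apply, f]
  have hf0 : f ≠ 0 := fun h => hi (LinearMap.congr_fun h p)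
  refine ⟨Pi.single i 1, fun k h => SymPow.mkSym_const_ne_zero (K := K) (k := k.val + 1) hf0 ?_⟩
  have hcons : Fin.cons f (fun _ : Fin k.val => f) = fun _ => f :=
    Fin.cons_self_tail (fun _ => f)
  simpa [h, hf, hcons] using (hraise (Pi.single i 1) k fun _ => f).symm

variable {Q : Type*} [AddCommGroup Q] [Module K Q] {β : Q →ₗ[K] (ι → K)} {n : ℕ}
  {lower : (ι → K) → ∀ k : Fin n, SymPow K Q (k.val + 1) →ₗ[K] SymPow K Q k.val}

theorem exists_forall_lower_ne_zero (hβ : β ≠ 0)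
    (hlower : ∀ c k (u : Fin (k.val + 1) → Q),
      lower c k (mkSym K u) = (∑ j, c j * β (u 0) j) • mkSym K (u ∘ Fin.succ)) :
    ∃ c, ∀ k, lower c k ≠ 0 := by
  classical
  obtain ⟨u, hu⟩ := DFunLike.ne_iff.mp hβ
  obtain ⟨j, hj⟩ := Function.ne_iff.mp hu
  have hsum : ∑ j', (Pi.single j 1 : ι → K) j' * β u j' = β u j := by simp [Pi.single_apply]
  have hu0 : u ≠ 0 := by rintro rfl; simp at hj
  refine ⟨Pi.single j 1, fun k h => ?_⟩
  have h0 := hlower (Pi.single j 1) k fun _ => u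
  rw [h, hsum, LinearMap.zero_apply, eq_comm, smul_eq_zero] at h0
  exact h0.elim hj (SymPow.mkSym_const_ne_zero hu0)

theorem lower_eq_zero (hβ : β = 0)
    (hlower : ∀ c k (u : Fin (k.val + 1) → Q),
      lower c k (mkSym K u) = (∑ j, c j * β (u 0) j) • mkSym K (u ∘ Fin.succ)) (c k) :
    lower c k = 0 :=
  SymPow.hom_ext fun u => by simp [hlower, hβ]

end Beilinson

theorem W_alpha_beta_simple_iff_beta_injective_general
    (n : ℕ)
    (P : Type*) [AddCommGroup P] [Module ℂ P]
    (hP : Module.finrank ℂ P = 1)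
    (α : P →ₗ[ℂ] (Fin (n + 2) → ℂ)) (hα : Function.Injective α)
    (β : Module.Dual ℂ P →ₗ[ℂ] (Fin (n + 2) → ℂ))
    (raise : (Fin (n + 2) → ℂ) → ∀ k : Fin (n + 1),
      SymPow ℂ (Module.Dual ℂ P) k.val →ₗ[ℂ] SymPow ℂ (Module.Dual ℂ P) (k.val + 1))
    (hraise : ∀ (c : Fin (n + 2) → ℂ) (k : Fin (n + 1)) (u : Fin k.val → Module.Dual ℂ P),
      raise c k (mkSym ℂ u) =
        mkSym ℂ (Fin.cons (∑ i, c i • ((LinearMap.proj i).comp α)) u))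
    (lower : (Fin (n + 2) → ℂ) → ∀ k : Fin (n + 1),
      SymPow ℂ (Module.Dual ℂ P) (k.val + 1) →ₗ[ℂ] SymPow ℂ (Module.Dual ℂ P) k.val)
    (hlower : ∀ (c : Fin (n + 2) → ℂ) (k : Fin (n + 1))
        (u : Fin (k.val + 1) → Module.Dual ℂ P),
      lower c k (mkSym ℂ u) = (∑ j, c j * β (u 0) j) • mkSym ℂ (u ∘ Fin.succ)) :
    ((∀ (W' : ∀ k : Fin (n + 2), Submodule ℂ (SymPow ℂ (Module.Dual ℂ P) k.val)),
        (∀ (c : Fin (n + 2) → ℂ) (k : Fin (n + 1)),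
          (W' k.castSucc).map (raise c k) ≤ W' k.succ ∧
          (W' k.succ).map (lower c k) ≤ W' k.castSucc) →
        (∀ k, W' k = ⊥) ∨ (∀ k, W' k = ⊤)) ↔ Function.Injective β) ∧
    ((∀ (W' : ∀ k : Fin (n + 2), Submodule ℂ (SymPow ℂ (Module.Dual ℂ P) k.val)),
        (∀ (c : Fin (n + 2) → ℂ) (k : Fin (n + 1)),
          (W' k.castSucc).map (raise c k) ≤ W' k.succ ∧
          (W' k.succ).map (lower c k) ≤ W' k.castSucc) →
        (∀ k, W' k = ⊥) ∨ (∀ k, W' k = ⊤)) ↔ β ≠ 0) := by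
  have hQ : finrank ℂ (Dual ℂ P) = 1 := Subspace.dual_finrank_eq.trans hP
  have : Nontrivial P := nontrivial_of_finrank_eq_succ hP
  have : IsSimpleModule ℂ (Dual ℂ P) := isSimpleModule_iff_finrank_eq_one.mpr hQ
  have : ∀ k, IsSimpleModule ℂ (SymPow ℂ (Dual ℂ P) k) := fun _ =>
    isSimpleModule_iff_finrank_eq_one.mpr (SymPow.finrank_eq_one hQ)
  have : ∀ k, Nontrivial (SymPow ℂ (Dual ℂ P) k) := fun _ => IsSimpleModule.nontrivial ℂ _
  have key : IsSimpleRep raise lower ↔ β ≠ 0 := by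
    refine ⟨fun hS hβ => not_isSimpleRep_of_down_eq_zero raise lower n.succ_ne_zero
      (lower_eq_zero hβ hlower) hS, fun hβ => ?_⟩
    obtain ⟨c, hc⟩ := exists_forall_raise_ne_zero (LinearMap.ne_zero_of_injective hα) hraise
    obtain ⟨d, hd⟩ := exists_forall_lower_ne_zero hβ hlower
    exact isSimpleRep_of_ne_zero raise lower hc hd
  have hinj : Function.Injective β ↔ β ≠ 0 :=
    ⟨LinearMap.ne_zero_of_injective, LinearMap.injective_of_ne_zero⟩
  exact ⟨key.trans hinj.symm, key⟩

/-- `N = n + 2 ≥ 2`, `V = ℂ^N` with standard basis `v₁,…,v_N` and dual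
basis `f₁,…,f_N`; `P` is a one-dimensional `ℂ`-vector space, `α : P → V` is an injective
linear map and `β : P^∨ → V^*` (in coordinates: `β u j = β(u)(vⱼ) = u(β^∨ vⱼ)`) satisfies
`α^∨ ∘ β = 0`.  `W_{αβ}` is the representation of the double Beilinson quiver with relations
on `(W_{αβ})_k = Sym^k P^∨`, where `f = ∑ cᵢfᵢ ∈ V^*` acts by `u¹⋯u^k ↦ α^∨(f)·u¹⋯u^k`
(`α^∨(f) = ∑ cᵢ • (fᵢ ∘ α)`) and `v = ∑ cⱼvⱼ ∈ V` acts by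
`u¹⋯u^k ↦ u¹(β^∨ v)·u²⋯u^k = (∑ cⱼ β(u¹)ⱼ)·u²⋯u^k`.  Then `W_{αβ}` is simple (its only
subrepresentations are `0` and itself) if and only if `β` is injective, equivalently
(as `P^∨` is one-dimensional) if and only if `β ≠ 0`. -/
theorem W_alpha_beta_simple_iff_beta_injective
    (n : ℕ)
    (P : Type*) [AddCommGroup P] [Module ℂ P] [FiniteDimensional ℂ P]
    (hP : Module.finrank ℂ P = 1)
    (α : P →ₗ[ℂ] (Fin (n + 2) → ℂ)) (hα : Function.Injective α)
    (β : Module.Dual ℂ P →ₗ[ℂ] (Fin (n + 2) → ℂ))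
    (hβ : ∀ (u : Module.Dual ℂ P) (p : P), ∑ i, β u i * α p i = 0)
    (raise : (Fin (n + 2) → ℂ) → ∀ k : Fin (n + 1),
      SymPow ℂ (Module.Dual ℂ P) k.val →ₗ[ℂ] SymPow ℂ (Module.Dual ℂ P) (k.val + 1))
    (hraise : ∀ (c : Fin (n + 2) → ℂ) (k : Fin (n + 1)) (u : Fin k.val → Module.Dual ℂ P),
      raise c k (mkSym ℂ u) =
        mkSym ℂ (Fin.cons (∑ i, c i • ((LinearMap.proj i).comp α)) u))
    (lower : (Fin (n + 2) → ℂ) → ∀ k : Fin (n + 1),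
      SymPow ℂ (Module.Dual ℂ P) (k.val + 1) →ₗ[ℂ] SymPow ℂ (Module.Dual ℂ P) k.val)
    (hlower : ∀ (c : Fin (n + 2) → ℂ) (k : Fin (n + 1))
        (u : Fin (k.val + 1) → Module.Dual ℂ P),
      lower c k (mkSym ℂ u) = (∑ j, c j * β (u 0) j) • mkSym ℂ (u ∘ Fin.succ)) :
    ((∀ (W' : ∀ k : Fin (n + 2), Submodule ℂ (SymPow ℂ (Module.Dual ℂ P) k.val)),
        (∀ (c : Fin (n + 2) → ℂ) (k : Fin (n + 1)),
          (W' k.castSucc).map (raise c k) ≤ W' k.succ ∧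
          (W' k.succ).map (lower c k) ≤ W' k.castSucc) →
        (∀ k, W' k = ⊥) ∨ (∀ k, W' k = ⊤)) ↔ Function.Injective β) ∧
    ((∀ (W' : ∀ k : Fin (n + 2), Submodule ℂ (SymPow ℂ (Module.Dual ℂ P) k.val)),
        (∀ (c : Fin (n + 2) → ℂ) (k : Fin (n + 1)),
          (W' k.castSucc).map (raise c k) ≤ W' k.succ ∧
          (W' k.succ).map (lower c k) ≤ W' k.castSucc) →
        (∀ k, W' k = ⊥) ∨ (∀ k, W' k = ⊤)) ↔ β ≠ 0) :=
  W_alpha_beta_simple_iff_beta_injective_general n P hP α hα β raise hraise lower hlower
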